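/- Let ε > 0 and let Z₁, Z₂ be independent Laplace(0, 1/ε) random variables on a probability space. For all reals n₁, n₂, with L₁ = max(n₁, n₂) and L₂ = min(n₁, n₂), E[ min(n₁ + Z₁, n₂ + Z₂) ] = L₂ + (exp(−ε·(L₁ − L₂))/4)·(L₂ − L₁ − 3/ε). -/

import Mathlib

/-!
Since `min x y = x - (x - y)⁺`, with `c = n₁ - n₂` everything reduces to `E[(c + Z₁ - Z₂)⁺]`.
Integrating out `Z₂` first gives, for a Laplace variable `Z`, `E[(b + Z)⁺] = b⁺ + e^{-ε|b|}/(2ε)`: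
for `b ≤ 0` this is a single exponential tail integral, and `b ≥ 0` reduces to it through
`(b + z)⁺ = (b + z) + (-b - z)⁺` and the symmetry of `Z`. Integrating this against `Z₁` leaves
one two-sided integral, `E[e^{-ε|c + Z|}] = (1 + ε|c|) e^{-ε|c|} / 2`.
-/

open MeasureTheory Real ProbabilityTheory Set

lemma min_eq_sub_max_sub_zero (a b : ℝ) : min a b = a - max (a - b) 0 := by
  rcases le_total a b with h | h
  · rw [min_eq_left h, max_eq_right (by linarith)]; ring
  · rw [min_eq_right h, max_eq_left (by linarith)]; ring

lemma integral_Ioi_sub_mul_exp_neg_mul {ε : ℝ} (hε : 0 < ε) (t : ℝ) :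
    ∫ z in Ioi t, (z - t) * exp (-(ε * z)) = exp (-(ε * t)) / ε ^ 2 := by
  have hshift := (measurePreserving_add_right volume t).setIntegral_preimage_emb
    (measurableEmbedding_addRight t) (fun z => (z - t) * exp (-(ε * z))) (Ioi t)
  rw [preimage_add_const_Ioi, sub_self] at hshift
  have hgamma := integral_rpow_mul_exp_neg_mul_Ioi (a := 2) two_pos hε
  norm_num [Real.Gamma_two] at hgamma
  rw [← hshift]
  simp only [add_sub_cancel_right, mul_add, neg_add, exp_add]
  calc ∫ x in Ioi 0, x * (exp (-(ε * x)) * exp (-(ε * t)))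
      = (∫ x in Ioi 0, x * exp (-(ε * x))) * exp (-(ε * t)) := by
        rw [← integral_mul_const]; simp only [mul_assoc]
    _ = exp (-(ε * t)) / ε ^ 2 := by rw [hgamma]; ring

lemma integrable_comp_abs {k : ℝ → ℝ} (hk : IntegrableOn k (Ioi 0)) :
    Integrable (fun z => k |z|) := by
  have hneg : IntegrableOn (fun z => k |z|) (Iic 0) := by
    rw [integrableOn_Iic_iff_integrableOn_Iio]
    refine (IntegrableOn.comp_neg_Iio (c := 0) (by rwa [neg_zero])).congr_fun
      (fun z hz => ?_) measurableSet_Iio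
    rw [abs_of_neg hz]
  have hpos : IntegrableOn (fun z => k |z|) (Ioi 0) :=
    hk.congr_fun (fun z hz => by rw [abs_of_pos hz]) measurableSet_Ioi
  rw [← integrableOn_univ, ← Iic_union_Ioi (a := (0 : ℝ))]
  exact hneg.union hpos

lemma ProbabilityTheory.IndepFun.integral_comp_eq_integral_integral {Ω α β : Type*}
    [MeasurableSpace Ω] [MeasurableSpace α] [MeasurableSpace β] {P : Measure Ω} [IsFiniteMeasure P]
    {X : Ω → α} {Y : Ω → β} (hX : AEMeasurable X P) (hY : AEMeasurable Y P) (hXY : IndepFun X Y P)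
    {F : α × β → ℝ} (hF : Integrable F ((P.map X).prod (P.map Y))) :
    ∫ ω, F (X ω, Y ω) ∂P = ∫ x, ∫ y, F (x, y) ∂P.map Y ∂P.map X := by
  rw [← integral_prod F hF, ← (indepFun_iff_map_prod_eq_prod_map_map hX hY).1 hXY,
    integral_map (hX.prodMk hY)]
  rw [← (indepFun_iff_map_prod_eq_prod_map_map hX hY).1 hXY] at hF
  exact hF.aestronglyMeasurable

-- The density of the Laplace law with location `0` and scale `1/ε` (rate `ε`).
noncomputable def laplacePDFReal (ε z : ℝ) : ℝ := ε / 2 * exp (-ε * |z|)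

noncomputable def laplaceReal (ε : ℝ) : Measure ℝ :=
  volume.withDensity fun z => ENNReal.ofReal (laplacePDFReal ε z)

section Laplace

variable {ε : ℝ}

lemma laplacePDFReal_nonneg (hε : 0 ≤ ε) (z : ℝ) : 0 ≤ laplacePDFReal ε z := by
  unfold laplacePDFReal; positivity

lemma laplacePDFReal_neg (ε z : ℝ) : laplacePDFReal ε (-z) = laplacePDFReal ε z := by
  simp [laplacePDFReal]

lemma laplacePDFReal_of_nonneg {z : ℝ} (hz : 0 ≤ z) :
    laplacePDFReal ε z = ε / 2 * exp (-(ε * z)) := by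
  rw [laplacePDFReal, abs_of_nonneg hz, neg_mul]

lemma laplacePDFReal_of_nonpos {z : ℝ} (hz : z ≤ 0) :
    laplacePDFReal ε z = ε / 2 * exp (ε * z) := by
  rw [laplacePDFReal, abs_of_nonpos hz]; ring_nf

lemma measurable_laplacePDFReal (ε : ℝ) : Measurable (laplacePDFReal ε) := by
  unfold laplacePDFReal; fun_prop

lemma integral_laplaceReal (hε : 0 ≤ ε) (g : ℝ → ℝ) :
    ∫ z, g z ∂laplaceReal ε = ∫ z, laplacePDFReal ε z * g z := by
  rw [laplaceReal, integral_withDensity_eq_integral_toReal_smul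
    (measurable_laplacePDFReal ε).ennreal_ofReal (.of_forall fun _ => ENNReal.ofReal_lt_top)]
  simp only [ENNReal.toReal_ofReal (laplacePDFReal_nonneg hε _), smul_eq_mul]

lemma integrable_laplaceReal_iff (hε : 0 ≤ ε) {g : ℝ → ℝ} :
    Integrable g (laplaceReal ε) ↔ Integrable fun z => laplacePDFReal ε z * g z := by
  rw [laplaceReal, integrable_withDensity_iff_integrable_smul'
    (measurable_laplacePDFReal ε).ennreal_ofReal (.of_forall fun _ => ENNReal.ofReal_lt_top)]
  simp only [ENNReal.toReal_ofReal (laplacePDFReal_nonneg hε _), smul_eq_mul]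

lemma integral_laplaceReal_comp_neg (hε : 0 ≤ ε) (g : ℝ → ℝ) :
    ∫ z, g (-z) ∂laplaceReal ε = ∫ z, g z ∂laplaceReal ε := by
  rw [integral_laplaceReal hε, integral_laplaceReal hε,
    ← integral_neg_eq_self (fun z => laplacePDFReal ε z * g z)]
  simp only [laplacePDFReal_neg]

lemma integrable_laplacePDFReal (hε : 0 < ε) : Integrable (laplacePDFReal ε) :=
  integrable_comp_abs ((integrableOn_exp_mul_Ioi (neg_lt_zero.2 hε) 0).const_mul (ε / 2))

lemma integral_laplacePDFReal (hε : 0 < ε) : ∫ z, laplacePDFReal ε z = 1 := by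
  unfold laplacePDFReal
  rw [integral_comp_abs (f := fun x => ε / 2 * exp (-ε * x)), integral_const_mul,
    integral_exp_mul_Ioi (neg_lt_zero.2 hε)]
  field_simp
  simp

lemma isProbabilityMeasure_laplaceReal (hε : 0 < ε) : IsProbabilityMeasure (laplaceReal ε) := by
  constructor
  rw [laplaceReal, withDensity_apply _ MeasurableSet.univ, Measure.restrict_univ,
    ← ofReal_integral_eq_lintegral_ofReal (integrable_laplacePDFReal hε)
      (.of_forall (laplacePDFReal_nonneg hε.le)), integral_laplacePDFReal hε, ENNReal.ofReal_one]

lemma integrable_id_laplaceReal (hε : 0 < ε) : Integrable id (laplaceReal ε) := by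
  rw [← integrable_norm_iff aestronglyMeasurable_id, integrable_laplaceReal_iff hε.le]
  have hk := integrableOn_rpow_mul_exp_neg_mul_rpow (s := 1) (p := 1) (by norm_num) one_pos hε
  simp only [rpow_one] at hk
  refine (integrable_comp_abs (hk.const_mul (ε / 2))).congr (.of_forall fun z => ?_)
  simp only [laplacePDFReal, id, norm_eq_abs]; ring

lemma integral_id_laplaceReal (hε : 0 ≤ ε) : ∫ z, z ∂laplaceReal ε = 0 := by
  have h := integral_laplaceReal_comp_neg hε id
  simp only [id] at h
  rw [integral_neg] at h
  linarith

lemma integral_max_sub_zero_laplaceReal (hε : 0 < ε) {t : ℝ} (ht : 0 ≤ t) :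
    ∫ z, max (z - t) 0 ∂laplaceReal ε = exp (-ε * t) / (2 * ε) := by
  have hvanish : ∀ z ∉ Ioi t, laplacePDFReal ε z * max (z - t) 0 = 0 := fun z hz => by
    rw [max_eq_right (sub_nonpos.2 (not_lt.1 hz)), mul_zero]
  have hIoi : ∀ z ∈ Ioi t,
      laplacePDFReal ε z * max (z - t) 0 = ε / 2 * ((z - t) * exp (-(ε * z))) := fun z hz => by
    rw [laplacePDFReal_of_nonneg (ht.trans hz.out.le), max_eq_left (sub_nonneg.2 hz.out.le)]
    ring
  rw [integral_laplaceReal hε.le, ← setIntegral_eq_integral_of_forall_compl_eq_zero hvanish,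
    setIntegral_congr_fun measurableSet_Ioi hIoi, integral_const_mul,
    integral_Ioi_sub_mul_exp_neg_mul hε]
  field_simp

lemma integral_max_add_zero_laplaceReal (hε : 0 < ε) (b : ℝ) :
    ∫ z, max (b + z) 0 ∂laplaceReal ε = max b 0 + exp (-ε * |b|) / (2 * ε) := by
  have := isProbabilityMeasure_laplaceReal hε
  rcases le_total b 0 with hb | hb
  · rw [max_eq_right hb, abs_of_nonpos hb, zero_add,
      ← integral_max_sub_zero_laplaceReal hε (neg_nonneg.2 hb)]
    simp only [sub_neg_eq_add, add_comm b]
  · have hid : Integrable (fun z => z) (laplaceReal ε) := integrable_id_laplaceReal hε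
    have hshift : Integrable (fun z => b + z) (laplaceReal ε) := (integrable_const b).add hid
    have hsplit : ∀ z, max (b + z) 0 = (b + z) + max (-z - b) 0 := fun z => by
      rcases le_total (b + z) 0 with h | h
      · rw [max_eq_right h, max_eq_left (by linarith)]; ring
      · rw [max_eq_left h, max_eq_right (by linarith)]; ring
    have htail : Integrable (fun z => max (-z - b) 0) (laplaceReal ε) :=
      (hid.neg.sub (integrable_const b)).pos_part
    simp only [hsplit]
    rw [integral_add hshift htail, integral_add (integrable_const b) hid,
      integral_const, probReal_univ, one_smul,
      integral_id_laplaceReal hε.le, max_eq_left hb, abs_of_nonneg hb,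
      integral_laplaceReal_comp_neg hε.le (fun z => max (z - b) 0),
      integral_max_sub_zero_laplaceReal hε hb, add_zero]

lemma integrable_exp_neg_mul_abs_add_laplaceReal (hε : 0 < ε) (b : ℝ) :
    Integrable (fun z => exp (-ε * |b + z|)) (laplaceReal ε) := by
  have := isProbabilityMeasure_laplaceReal hε
  refine .of_bound (by fun_prop) 1 (.of_forall fun z => ?_)
  rw [norm_of_nonneg (exp_nonneg _), exp_le_one_iff]
  nlinarith [abs_nonneg (b + z)]

lemma integral_exp_neg_mul_abs_add_laplaceReal_of_nonneg (hε : 0 < ε) {a : ℝ} (ha : 0 ≤ a) :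
    ∫ z, exp (-ε * |a + z|) ∂laplaceReal ε = (1 + ε * a) * exp (-ε * a) / 2 := by
  set F := fun z => laplacePDFReal ε z * exp (-ε * |a + z|)
  have hF : Integrable F :=
    (integrable_laplaceReal_iff hε.le).1 (integrable_exp_neg_mul_abs_add_laplaceReal hε a)
  have hleft : ∫ z in Iic (-a), F z = exp (-ε * a) / 4 := by
    rw [setIntegral_congr_fun measurableSet_Iic
      (g := fun z => ε / 2 * exp (ε * a) * exp (2 * ε * z)) fun z hz => ?_,
      integral_const_mul, integral_exp_mul_Iic (by positivity)]
    · rw [← mul_div_assoc, mul_assoc (ε / 2), ← exp_add]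
      field_simp
      ring_nf
    · have hz : z ≤ -a := hz
      simp only [F, laplacePDFReal_of_nonpos (hz.trans (neg_nonpos.2 ha)),
        abs_of_nonpos (by linarith : a + z ≤ 0), mul_assoc, ← exp_add]
      ring_nf
  have hmid : ∫ z in Ioc (-a) 0, F z = ε / 2 * exp (-ε * a) * a := by
    rw [setIntegral_congr_fun measurableSet_Ioc (g := fun _ => ε / 2 * exp (-ε * a))
      fun z hz => ?_, setIntegral_const, Real.volume_real_Ioc_of_le (by linarith), smul_eq_mul]
    · ring
    · simp only [F, laplacePDFReal_of_nonpos hz.2, abs_of_pos (by linarith [hz.1] : 0 < a + z),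
        mul_assoc, ← exp_add]
      ring_nf
  have hright : ∫ z in Ioi 0, F z = exp (-ε * a) / 4 := by
    rw [setIntegral_congr_fun measurableSet_Ioi
      (g := fun z => ε / 2 * exp (-ε * a) * exp (-(2 * ε) * z)) fun z hz => ?_,
      integral_const_mul, integral_exp_mul_Ioi (by linarith)]
    · rw [mul_zero, exp_zero]
      field_simp
      ring
    · simp only [F, laplacePDFReal_of_nonneg (le_of_lt hz),
        abs_of_pos (by linarith [hz.out] : 0 < a + z), mul_assoc, ← exp_add]
      ring_nf
  rw [integral_laplaceReal hε.le, ← intervalIntegral.integral_Iic_add_Ioi hF.integrableOn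
      hF.integrableOn, ← Ioc_union_Ioi_eq_Ioi (neg_nonpos.2 ha),
    setIntegral_union (Ioc_disjoint_Ioi le_rfl) measurableSet_Ioi hF.integrableOn hF.integrableOn,
    hleft, hmid, hright]
  ring

lemma integral_exp_neg_mul_abs_add_laplaceReal (hε : 0 < ε) (b : ℝ) :
    ∫ z, exp (-ε * |b + z|) ∂laplaceReal ε = (1 + ε * |b|) * exp (-ε * |b|) / 2 := by
  rcases le_total 0 b with hb | hb
  · rw [abs_of_nonneg hb, integral_exp_neg_mul_abs_add_laplaceReal_of_nonneg hε hb]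
  · rw [abs_of_nonpos hb,
      ← integral_exp_neg_mul_abs_add_laplaceReal_of_nonneg hε (neg_nonneg.2 hb),
      ← integral_laplaceReal_comp_neg hε.le]
    simp only [← abs_neg (b + -_), neg_add, neg_neg]

end Laplace

section LaplaceRandomVariable

variable {Ω : Type*} [MeasurableSpace Ω] {P : Measure Ω} {ε : ℝ} {X Y : Ω → ℝ}

lemma integrable_of_map_eq_laplaceReal (hε : 0 < ε) (hX : AEMeasurable X P)
    (hlaw : P.map X = laplaceReal ε) : Integrable X P := by
  rw [← Function.id_comp X, ← integrable_map_measure aestronglyMeasurable_id hX, hlaw]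
  exact integrable_id_laplaceReal hε

lemma integral_eq_zero_of_map_eq_laplaceReal (hε : 0 ≤ ε) (hX : AEMeasurable X P)
    (hlaw : P.map X = laplaceReal ε) : ∫ ω, X ω ∂P = 0 := by
  rw [← integral_id_laplaceReal hε, ← hlaw]
  exact (integral_map hX aestronglyMeasurable_id).symm

lemma integral_max_add_sub_zero_of_indepFun_laplaceReal [IsFiniteMeasure P] (hε : 0 < ε)
    (hX : AEMeasurable X P) (hY : AEMeasurable Y P) (hXY : IndepFun X Y P)
    (hlawX : P.map X = laplaceReal ε) (hlawY : P.map Y = laplaceReal ε) (c : ℝ) :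
    ∫ ω, max (c + X ω - Y ω) 0 ∂P = max c 0 + (3 + ε * |c|) * exp (-ε * |c|) / (4 * ε) := by
  have := isProbabilityMeasure_laplaceReal hε
  have hid : Integrable (fun z => z) (laplaceReal ε) := integrable_id_laplaceReal hε
  have hF : Integrable (fun p : ℝ × ℝ => max (c + p.1 - p.2) 0)
      ((laplaceReal ε).prod (laplaceReal ε)) :=
    (((integrable_const c).add (hid.comp_fst _)).sub (hid.comp_snd _)).pos_part
  have hinner : ∀ x, ∫ y, max (c + x - y) 0 ∂laplaceReal ε
      = max (c + x) 0 + exp (-ε * |c + x|) / (2 * ε) := fun x => by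
    rw [← integral_max_add_zero_laplaceReal hε, ← integral_laplaceReal_comp_neg hε.le]
    simp only [sub_neg_eq_add]
  rw [hXY.integral_comp_eq_integral_integral hX hY (F := fun p => max (c + p.1 - p.2) 0)
    (by rwa [hlawX, hlawY]), hlawX, hlawY]
  have hpos : Integrable (fun x => max (c + x) 0) (laplaceReal ε) :=
    ((integrable_const c).add hid).pos_part
  simp only [hinner]
  rw [integral_add hpos ((integrable_exp_neg_mul_abs_add_laplaceReal hε c).div_const _),
    integral_div, integral_max_add_zero_laplaceReal hε,
    integral_exp_neg_mul_abs_add_laplaceReal hε]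
  field_simp
  ring

end LaplaceRandomVariable

/-- Expectation of the minimum of two independent Laplace(0, 1/ε) random variables
shifted by `n₁` and `n₂`:
`E[min(n₁ + Z₁, n₂ + Z₂)] = L₂ + (exp(−ε·(L₁ − L₂))/4)·(L₂ − L₁ − 3/ε)`
where `L₁ = max(n₁, n₂)` and `L₂ = min(n₁, n₂)`. -/
theorem expectation_min_shifted_laplace {Ω : Type*} [MeasurableSpace Ω]
    (P : Measure Ω) [IsProbabilityMeasure P]
    (ε : ℝ) (hε : 0 < ε) (Z₁ Z₂ : Ω → ℝ)
    (hZ₁ : Measurable Z₁) (hZ₂ : Measurable Z₂)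
    (hindep : IndepFun Z₁ Z₂ P)
    (hlaw₁ : Measure.map Z₁ P =
      volume.withDensity (fun z => ENNReal.ofReal (ε / 2 * Real.exp (-ε * |z|))))
    (hlaw₂ : Measure.map Z₂ P =
      volume.withDensity (fun z => ENNReal.ofReal (ε / 2 * Real.exp (-ε * |z|))))
    (n₁ n₂ : ℝ) :
    ∫ ω, min (n₁ + Z₁ ω) (n₂ + Z₂ ω) ∂P =
      min n₁ n₂ + Real.exp (-ε * (max n₁ n₂ - min n₁ n₂)) / 4 *
        (min n₁ n₂ - max n₁ n₂ - 3 / ε) := by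
  have hL₁ : P.map Z₁ = laplaceReal ε := hlaw₁
  have hL₂ : P.map Z₂ = laplaceReal ε := hlaw₂
  have hint₁ := integrable_of_map_eq_laplaceReal hε hZ₁.aemeasurable hL₁
  have hint₂ := integrable_of_map_eq_laplaceReal hε hZ₂.aemeasurable hL₂
  have hshift : Integrable (fun ω => n₁ + Z₁ ω) P := (integrable_const n₁).add hint₁
  have hexcess : Integrable (fun ω => max (n₁ - n₂ + Z₁ ω - Z₂ ω) 0) P :=
    (((integrable_const _).add hint₁).sub hint₂).pos_part
  have hmin : ∀ ω, min (n₁ + Z₁ ω) (n₂ + Z₂ ω) = n₁ + Z₁ ω - max (n₁ - n₂ + Z₁ ω - Z₂ ω) 0 :=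
    fun ω => by rw [min_eq_sub_max_sub_zero]; ring_nf
  simp only [hmin]
  rw [integral_sub hshift hexcess, integral_add (integrable_const n₁) hint₁,
    integral_eq_zero_of_map_eq_laplaceReal hε.le hZ₁.aemeasurable hL₁,
    integral_max_add_sub_zero_of_indepFun_laplaceReal hε hZ₁.aemeasurable hZ₂.aemeasurable
      hindep hL₁ hL₂, integral_const, probReal_univ, one_smul,
    ← neg_sub (max n₁ n₂), max_sub_min_eq_abs, abs_sub_comm, min_eq_sub_max_sub_zero]
  field_simp
  ring
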